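/- Let (X,d) be a complete regular semimetric space with a real-valued upper semicontinuous triangle function and φ an upper semicontinuous comparison function. For each j ∈ {1,…,n}, let (T_{k,j})_k be a sequence of φ-contractions converging pointwise to a φ-contraction T_{0,j}. Let H_k denote the unique compact fractal of the system (T_{k,1},…,T_{k,n}) for each k ≥ 0. Then D(H_k, H_0) → 0 as k → ∞ (stability of fractals). -/

import Mathlib

open Set Filter Topology ENNReal

namespace Semimetric

variable {X : Type*}

/-- Ball of radius `r` centered at `p`. -/
def Ball (d : X → X → ℝ) (p : X) (r : ℝ) : Set X := {x | d x p < r}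

/-- A set is open iff each of its points is interior. -/
def IsOpenS (d : X → X → ℝ) (U : Set X) : Prop := ∀ p ∈ U, ∃ r > (0:ℝ), Ball d p r ⊆ U

def IsClosedS (d : X → X → ℝ) (A : Set X) : Prop := IsOpenS d Aᶜ

/-- Compactness in the ball-generated topology. -/
def IsCompactS (d : X → X → ℝ) (H : Set X) : Prop :=
  ∀ C : Set (Set X), (∀ U ∈ C, IsOpenS d U) → H ⊆ ⋃₀ C →
    ∃ F ⊆ C, F.Finite ∧ H ⊆ ⋃₀ F

/-- Total boundedness: finite ε-nets exist for every ε > 0. -/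
def TotBddS (d : X → X → ℝ) (H : Set X) : Prop :=
  ∀ ε > (0:ℝ), ∃ P : Finset X, H ⊆ ⋃ p ∈ P, Ball d p ε

/-- Boundedness: finite diameter. -/
def BoundedS (d : X → X → ℝ) (A : Set X) : Prop := ∃ M : ℝ, ∀ x ∈ A, ∀ y ∈ A, d x y ≤ M

def IsCauchyS (d : X → X → ℝ) (x : ℕ → X) : Prop :=
  ∀ ε > (0:ℝ), ∃ N, ∀ m ≥ N, ∀ n ≥ N, d (x m) (x n) < ε

def ConvTo (d : X → X → ℝ) (x : ℕ → X) (p : X) : Prop :=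
  Tendsto (fun n => d (x n) p) atTop (nhds 0)

def IsCompleteS (d : X → X → ℝ) : Prop :=
  ∀ x : ℕ → X, IsCauchyS d x → ∃ p, ConvTo d x p

/-- Extended-real-valued triangle function for the semimetric `d`. -/
def IsTriangleFun (d : X → X → ℝ) (Φ : ℝ → ℝ → ℝ≥0∞) : Prop :=
  (∀ u v, Φ u v = Φ v u) ∧
  (∀ u₁ u₂ v, 0 ≤ u₁ → u₁ ≤ u₂ → 0 ≤ v → Φ u₁ v ≤ Φ u₂ v) ∧
  Φ 0 0 = 0 ∧
  ∀ x y z : X, ENNReal.ofReal (d x y) ≤ Φ (d x z) (d z y)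

/-- Regularity: continuity at (0,0) (within the nonnegative quadrant). -/
def RegularAt00 (Φ : ℝ → ℝ → ℝ≥0∞) : Prop :=
  ContinuousWithinAt (fun p : ℝ × ℝ => Φ p.1 p.2) (Set.Ici 0 ×ˢ Set.Ici 0) (0, 0)

/-- Real-valued triangle function for the semimetric `d`. -/
def IsTriangleFunR (d : X → X → ℝ) (Φ : ℝ → ℝ → ℝ) : Prop :=
  (∀ u v, Φ u v = Φ v u) ∧
  (∀ u₁ u₂ v, 0 ≤ u₁ → u₁ ≤ u₂ → 0 ≤ v → Φ u₁ v ≤ Φ u₂ v) ∧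
  (∀ u v, 0 ≤ u → 0 ≤ v → 0 ≤ Φ u v) ∧
  Φ 0 0 = 0 ∧
  ∀ x y z : X, d x y ≤ Φ (d x z) (d z y)

/-- The basic triangle function of `d`. -/
noncomputable def PhiBasic (d : X → X → ℝ) (u v : ℝ) : ℝ≥0∞ :=
  sSup {e | ∃ x y p : X, d p x ≤ u ∧ d p y ≤ v ∧ e = ENNReal.ofReal (d x y)}

/-- The Hausdorff–Pompeiu distance of two sets. -/
noncomputable def HD (d : X → X → ℝ) (A B : Set X) : ℝ≥0∞ :=
  sInf {ε : ℝ≥0∞ | 0 < ε ∧ (∀ a ∈ A, ∃ b ∈ B, ENNReal.ofReal (d a b) < ε) ∧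
    (∀ b ∈ B, ∃ a ∈ A, ENNReal.ofReal (d b a) < ε)}

/-- Comparison function: increasing on ℝ₊, nonnegative, iterates tend to 0. -/
def IsComparison (φ : ℝ → ℝ) : Prop :=
  (∀ t, 0 ≤ t → 0 ≤ φ t) ∧
  (∀ s t, 0 ≤ s → s ≤ t → φ s ≤ φ t) ∧
  ∀ t > (0:ℝ), Tendsto (fun n => φ^[n] t) atTop (nhds 0)

/-- φ-contraction. -/
def IsContraction (d : X → X → ℝ) (φ : ℝ → ℝ) (T : X → X) : Prop :=
  ∀ x y, d (T x) (T y) ≤ φ (d x y)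

/-- ψ(t) = sup { s ≥ 0 : s ≤ Φ(t, φ(s)) }. -/
noncomputable def Psi (Φ : ℝ → ℝ → ℝ≥0∞) (φ : ℝ → ℝ) (t : ℝ) : ℝ≥0∞ :=
  sSup {e | ∃ s : ℝ, 0 ≤ s ∧ ENNReal.ofReal s ≤ Φ t (φ s) ∧ e = ENNReal.ofReal s}

end Semimetric

/-!
Every point of the fractal `H` of a system `S` is `S_{j₁} ∘ ⋯ ∘ S_{jᵣ} x` for a word of any
prescribed length `r` and some `x ∈ H`. For `r` large the φ-contraction makes the choice of `x`
irrelevant up to `φ^[r] (diam)`, so `H_k` and `H₀` are close as soon as the compositions of `T_k`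
and of `T₀` along arbitrary words stay uniformly close on `H₀`. Along words of bounded length this
follows from the uniform convergence `T_k → T₀` on the compact set `H₀`; long words are cut into
blocks of a fixed length `m` with `φ^[m]` small, and regularity of the semimetric at `0` propagates
the bound from block to block.
-/

namespace Semimetric

variable {X ι : Type*} {d : X → X → ℝ} {φ : ℝ → ℝ}

theorem IsComparison.apply_le (hφ : IsComparison φ) {t : ℝ} (ht : 0 ≤ t) : φ t ≤ t := by
  by_contra! hlt
  have hφt : 0 < φ t := ht.trans_lt hlt
  have hge : ∀ m, φ t ≤ φ^[m] (φ t) := by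
    intro m
    induction m with
    | zero => exact le_rfl
    | succ m ih =>
      rw [Function.iterate_succ_apply']
      exact hφ.2.1 t _ ht (hlt.le.trans ih)
  obtain ⟨m, hm⟩ := ((hφ.2.2 _ hφt).eventually_lt_const hφt).exists
  exact absurd hm (not_lt.2 (hge m))

theorem IsComparison.iterate_nonneg (hφ : IsComparison φ) (r : ℕ) {t : ℝ} (ht : 0 ≤ t) :
    0 ≤ φ^[r] t := by
  induction r with
  | zero => exact ht
  | succ r ih => rw [Function.iterate_succ_apply']; exact hφ.1 _ ih

theorem IsComparison.iterate_mono (hφ : IsComparison φ) (r : ℕ) {s t : ℝ} (hs : 0 ≤ s)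
    (hst : s ≤ t) : φ^[r] s ≤ φ^[r] t := by
  induction r with
  | zero => exact hst
  | succ r ih =>
    rw [Function.iterate_succ_apply', Function.iterate_succ_apply']
    exact hφ.2.1 _ _ (hφ.iterate_nonneg r hs) ih

theorem IsComparison.eventually_iterate_le (hφ : IsComparison φ) (t : ℝ) {δ : ℝ} (hδ : 0 < δ) :
    ∀ᶠ r in atTop, ∀ s, 0 ≤ s → s ≤ t → φ^[r] s ≤ δ := by
  have hC : (0 : ℝ) < max t 1 := lt_max_of_lt_right one_pos
  filter_upwards [(hφ.2.2 _ hC).eventually_lt_const hδ] with r hr s hs hst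
  exact (hφ.iterate_mono r hs (hst.trans (le_max_left t 1))).trans hr.le

theorem IsContraction.dist_le (hpos : ∀ x y, 0 ≤ d x y) (hφ : IsComparison φ) {T : X → X}
    (hT : IsContraction d φ T) (x y : X) : d (T x) (T y) ≤ d x y :=
  (hT x y).trans (hφ.apply_le (hpos x y))

def applyWord (S : ι → X → X) (l : List ι) (x : X) : X := l.foldr S x

@[simp] theorem applyWord_nil (S : ι → X → X) (x : X) : applyWord S [] x = x := rfl

@[simp] theorem applyWord_cons (S : ι → X → X) (j : ι) (l : List ι) (x : X) :
    applyWord S (j :: l) x = S j (applyWord S l x) := rfl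

theorem applyWord_append (S : ι → X → X) (l₁ l₂ : List ι) (x : X) :
    applyWord S (l₁ ++ l₂) x = applyWord S l₁ (applyWord S l₂ x) :=
  List.foldr_append

theorem dist_applyWord_le (hpos : ∀ x y, 0 ≤ d x y) (hφ : IsComparison φ) {S : ι → X → X}
    (hS : ∀ j, IsContraction d φ (S j)) (l : List ι) (x y : X) :
    d (applyWord S l x) (applyWord S l y) ≤ φ^[l.length] (d x y) := by
  induction l with
  | nil => exact le_rfl
  | cons j l ih =>
    rw [applyWord_cons, applyWord_cons, List.length_cons, Function.iterate_succ_apply']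
    exact (hS j _ _).trans (hφ.2.1 _ _ (hpos _ _) ih)

theorem applyWord_mem {S : ι → X → X} {A : Set X} (hA : A = ⋃ j, S j '' A) (l : List ι) {x : X}
    (hx : x ∈ A) : applyWord S l x ∈ A := by
  induction l with
  | nil => exact hx
  | cons j l ih =>
    rw [applyWord_cons, hA]
    exact mem_iUnion.2 ⟨j, mem_image_of_mem _ ih⟩

theorem exists_applyWord_eq {S : ι → X → X} {A : Set X} (hA : A = ⋃ j, S j '' A) (r : ℕ) {a : X}
    (ha : a ∈ A) : ∃ (l : List ι) (x : X), l.length = r ∧ x ∈ A ∧ applyWord S l x = a := by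
  induction r generalizing a with
  | zero => exact ⟨[], a, rfl, ha, rfl⟩
  | succ r ih =>
    rw [hA] at ha
    obtain ⟨j, b, hb, rfl⟩ := mem_iUnion.1 ha
    obtain ⟨l, x, hl, hx, rfl⟩ := ih hb
    exact ⟨j :: l, x, by rw [List.length_cons, hl], hx, rfl⟩

/-- Regularity of the semimetric (continuity of its triangle function at `(0, 0)`), stated in terms
of `d` alone. -/
def IsRegularS (d : X → X → ℝ) : Prop :=
  ∀ c > (0 : ℝ), ∃ δ > (0 : ℝ), ∀ x y z, d x z ≤ δ → d z y ≤ δ → d x y < c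

theorem IsTriangleFunR.isRegularS (hpos : ∀ x y, 0 ≤ d x y) {Φ : ℝ → ℝ → ℝ}
    (hΦ : IsTriangleFunR d Φ)
    (hreg : UpperSemicontinuousWithinAt (fun p : ℝ × ℝ => Φ p.1 p.2) (Ici 0 ×ˢ Ici 0) (0, 0)) :
    IsRegularS d := by
  intro c hc
  obtain ⟨ε, hε, hball⟩ := Metric.mem_nhdsWithin_iff.1 (hreg c (by simpa [hΦ.2.2.2.1] using hc))
  refine ⟨ε / 2, half_pos hε, fun x y z hxz hzy => ?_⟩
  have hmem : (d x z, d z y) ∈ Metric.ball (0, 0) ε ∩ Ici 0 ×ˢ Ici 0 := by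
    refine ⟨?_, hpos x z, hpos z y⟩
    rw [Metric.mem_ball, Prod.dist_eq, Real.dist_0_eq_abs, Real.dist_0_eq_abs,
      abs_of_nonneg (hpos x z), abs_of_nonneg (hpos z y)]
    exact max_lt (by linarith) (by linarith)
  exact (hΦ.2.2.2.2 x y z).trans_lt (hball hmem)

theorem isOpenS_setOf_ball_subset (hd : IsRegularS d) (p : X) (ε : ℝ) :
    IsOpenS d {x | ∃ r > 0, Ball d x r ⊆ Ball d p ε} := by
  rintro x ⟨r, hr, hsub⟩
  obtain ⟨δ, hδ, hsmall⟩ := hd r hr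
  exact ⟨δ, hδ, fun y hy => ⟨δ, hδ, fun z hz => hsub (hsmall z x y (le_of_lt hz) (le_of_lt hy))⟩⟩

theorem IsCompactS.totBddS (hd : IsRegularS d) (hself : ∀ x, d x x = 0) {A : Set X}
    (hA : IsCompactS d A) : TotBddS d A := by
  intro ε hε
  set O : X → Set X := fun p => {x | ∃ r > 0, Ball d x r ⊆ Ball d p ε}
  have hcov : A ⊆ ⋃₀ (O '' univ) :=
    fun x _ => mem_sUnion_of_mem (show x ∈ O x from ⟨ε, hε, subset_rfl⟩)
      (mem_image_of_mem O (mem_univ x))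
  obtain ⟨P, -, hP, hAP⟩ := exists_subset_image_finite_and.1
    (hA _ (by rintro _ ⟨p, -, rfl⟩; exact isOpenS_setOf_ball_subset hd p ε) hcov)
  refine ⟨hP.toFinset, fun x hx => ?_⟩
  obtain ⟨_, ⟨p, hp, rfl⟩, r, hr, hsub⟩ := hAP hx
  have hxx : x ∈ Ball d x r := show d x x < r by rw [hself]; exact hr
  exact mem_iUnion₂.2 ⟨p, hP.mem_toFinset.2 hp, hsub hxx⟩

theorem TotBddS.exists_forall_dist_le (hpos : ∀ x y, 0 ≤ d x y) {Φ : ℝ → ℝ → ℝ}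
    (hΦ : IsTriangleFunR d Φ) {A : Set X} (hA : TotBddS d A) (y : X) :
    ∃ M, ∀ x ∈ A, d x y ≤ M := by
  obtain ⟨P, hP⟩ := hA 1 one_pos
  refine ⟨∑ p ∈ P, Φ 1 (d p y), fun x hx => ?_⟩
  obtain ⟨p, hp, hxp⟩ := mem_iUnion₂.1 (hP hx)
  calc d x y ≤ Φ (d x p) (d p y) := hΦ.2.2.2.2 x y p
    _ ≤ Φ 1 (d p y) := hΦ.2.1 _ _ _ (hpos x p) (le_of_lt hxp) (hpos p y)
    _ ≤ ∑ q ∈ P, Φ 1 (d q y) :=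
      Finset.single_le_sum (fun q _ => hΦ.2.2.1 _ _ zero_le_one (hpos q y)) hp

theorem TotBddS.eventually_forall_dist_le (hpos : ∀ x y, 0 ≤ d x y) (hsymm : ∀ x y, d x y = d y x)
    (hφ : IsComparison φ) (hd : IsRegularS d) {α : Type*} {l : Filter α} {T : α → X → X}
    {T₀ : X → X} (hT : ∀ k, IsContraction d φ (T k)) (hT₀ : IsContraction d φ T₀)
    (hconv : ∀ x, Tendsto (fun k => d (T k x) (T₀ x)) l (𝓝 0)) {A : Set X} (hA : TotBddS d A)
    {η : ℝ} (hη : 0 < η) : ∀ᶠ k in l, ∀ x ∈ A, d (T k x) (T₀ x) ≤ η := by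
  obtain ⟨δ₁, hδ₁, hsmall₁⟩ := hd η hη
  obtain ⟨δ₂, hδ₂, hsmall₂⟩ := hd δ₁ hδ₁
  obtain ⟨P, hP⟩ := hA (min δ₁ δ₂) (lt_min hδ₁ hδ₂)
  have hnet : ∀ᶠ k in l, ∀ p ∈ P, d (T k p) (T₀ p) < δ₂ :=
    (eventually_all_finset P).2 fun p _ => (hconv p).eventually_lt_const hδ₂
  filter_upwards [hnet] with k hk x hx
  obtain ⟨p, hp, hxp⟩ := mem_iUnion₂.1 (hP hx)
  have hxp : d x p ≤ min δ₁ δ₂ := le_of_lt hxp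
  refine (hsmall₁ _ _ (T k p) (((hT k).dist_le hpos hφ x p).trans (hxp.trans (min_le_left _ _)))
    (hsmall₂ _ _ (T₀ p) (hk p hp).le ?_).le).le
  calc d (T₀ p) (T₀ x) ≤ d p x := hT₀.dist_le hpos hφ p x
    _ = d x p := hsymm p x
    _ ≤ δ₂ := hxp.trans (min_le_right _ _)

theorem exists_forall_dist_applyWord_le_of_length_le (hpos : ∀ x y, 0 ≤ d x y)
    (hself : ∀ x, d x x = 0) (hφ : IsComparison φ) (hd : IsRegularS d) {S : ι → X → X}
    {A : Set X} (hA : A = ⋃ j, S j '' A) (m : ℕ) {c : ℝ} (hc : 0 < c) :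
    ∃ δ > 0, ∀ S' : ι → X → X, (∀ j, IsContraction d φ (S' j)) →
      (∀ j, ∀ x ∈ A, d (S' j x) (S j x) ≤ δ) →
      ∀ l : List ι, l.length ≤ m → ∀ s ∈ A, d (applyWord S' l s) (applyWord S l s) ≤ c := by
  induction m generalizing c with
  | zero =>
    refine ⟨c, hc, fun S' _ _ l hl s _ => ?_⟩
    rw [List.length_eq_zero_iff.1 (Nat.le_zero.1 hl), applyWord_nil, applyWord_nil, hself]
    exact hc.le
  | succ m ih =>
    obtain ⟨δ, hδ, hsmall⟩ := hd c hc
    obtain ⟨δ', hδ', hshort⟩ := ih hδ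
    refine ⟨min δ δ', lt_min hδ hδ', fun S' hS' hclose l hl s hs => ?_⟩
    cases l with
    | nil => rw [applyWord_nil, applyWord_nil, hself]; exact hc.le
    | cons j l =>
      have hclose' : ∀ j, ∀ x ∈ A, d (S' j x) (S j x) ≤ δ' :=
        fun j x hx => (hclose j x hx).trans (min_le_right _ _)
      rw [applyWord_cons, applyWord_cons]
      refine (hsmall _ _ (S' j (applyWord S l s)) ?_ ?_).le
      · exact ((hS' j).dist_le hpos hφ _ _).trans
          (hshort S' hS' hclose' l (Nat.le_of_succ_le_succ hl) s hs)
      · exact (hclose j _ (applyWord_mem hA l hs)).trans (min_le_left _ _)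

theorem exists_forall_dist_applyWord_le (hpos : ∀ x y, 0 ≤ d x y) (hself : ∀ x, d x x = 0)
    (hφ : IsComparison φ) (hd : IsRegularS d) {S : ι → X → X} {A : Set X}
    (hA : A = ⋃ j, S j '' A) {ρ : ℝ} (hρ : 0 < ρ) :
    ∃ η > 0, ∀ S' : ι → X → X, (∀ j, IsContraction d φ (S' j)) →
      (∀ j, ∀ x ∈ A, d (S' j x) (S j x) ≤ η) →
      ∀ (l : List ι), ∀ s ∈ A, d (applyWord S' l s) (applyWord S l s) ≤ ρ := by
  obtain ⟨δ, hδ, hsmall⟩ := hd ρ hρ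
  obtain ⟨m, hm, hm1⟩ := ((hφ.eventually_iterate_le ρ hδ).and (eventually_ge_atTop 1)).exists
  obtain ⟨η, hη, hshort⟩ :=
    exists_forall_dist_applyWord_le_of_length_le hpos hself hφ hd hA m (lt_min hδ hρ)
  refine ⟨η, hη, fun S' hS' hclose l => ?_⟩
  have hshort := hshort S' hS' hclose
  induction hN : l.length using Nat.strong_induction_on generalizing l with
  | _ N ih =>
    intro s hs
    by_cases hlm : l.length ≤ m
    · exact (hshort l hlm s hs).trans (min_le_right _ _)
    rw [← List.take_append_drop m l, applyWord_append, applyWord_append]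
    have hdrop := ih _ (by rw [List.length_drop]; omega) (l.drop m) rfl s hs
    have htake : (l.take m).length = m := List.length_take_of_le (by omega)
    refine (hsmall _ _ (applyWord S' (l.take m) (applyWord S (l.drop m) s)) ?_ ?_).le
    · refine (dist_applyWord_le hpos hφ hS' _ _ _).trans ?_
      rw [htake]
      exact hm _ (hpos _ _) hdrop
    · exact (hshort _ htake.le _ (applyWord_mem hA _ hs)).trans (min_le_left _ _)

theorem forall_exists_dist_lt_of_forall_dist_applyWord_le (hpos : ∀ x y, 0 ≤ d x y)
    (hsymm : ∀ x y, d x y = d y x) (hφ : IsComparison φ) {Φ : ℝ → ℝ → ℝ}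
    (hΦ : IsTriangleFunR d Φ) {S S' : ι → X → X} (hS' : ∀ j, IsContraction d φ (S' j))
    {A A' : Set X} (hA : A = ⋃ j, S j '' A) (hA' : A' = ⋃ j, S' j '' A') (hAne : A.Nonempty)
    (hA'ne : A'.Nonempty) (hAb : TotBddS d A) (hA'b : TotBddS d A') {δ ε : ℝ} (hδ : 0 < δ)
    (hsmall : ∀ x y z, d x z ≤ δ → d z y ≤ δ → d x y < ε)
    (hword : ∀ (l : List ι), ∀ s ∈ A, d (applyWord S' l s) (applyWord S l s) ≤ δ) :
    (∀ a ∈ A', ∃ b ∈ A, d a b < ε) ∧ (∀ b ∈ A, ∃ a ∈ A', d b a < ε) := by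
  obtain ⟨y, hy⟩ := hAne
  obtain ⟨y', hy'⟩ := hA'ne
  obtain ⟨M, hM⟩ := hA'b.exists_forall_dist_le hpos hΦ y
  obtain ⟨M', hM'⟩ := hAb.exists_forall_dist_le hpos hΦ y'
  obtain ⟨r, hr⟩ := (hφ.eventually_iterate_le M hδ).exists
  obtain ⟨r', hr'⟩ := (hφ.eventually_iterate_le M' hδ).exists
  constructor
  · intro a ha
    obtain ⟨l, x, hl, hx, rfl⟩ := exists_applyWord_eq hA' r ha
    refine ⟨applyWord S l y, applyWord_mem hA l hy, hsmall _ _ (applyWord S' l y) ?_ (hword l y hy)⟩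
    refine (dist_applyWord_le hpos hφ hS' l x y).trans ?_
    rw [hl]
    exact hr _ (hpos x y) (hM x hx)
  · intro b hb
    obtain ⟨l, x, hl, hx, rfl⟩ := exists_applyWord_eq hA r' hb
    refine ⟨applyWord S' l y', applyWord_mem hA' l hy',
      hsmall _ _ (applyWord S' l x) ((hsymm _ _).trans_le (hword l x hx)) ?_⟩
    refine (dist_applyWord_le hpos hφ hS' l x y').trans ?_
    rw [hl]
    exact hr' _ (hpos x y') (hM' x hx)

theorem HD_le_ofReal {A B : Set X} {ε : ℝ} (hε : 0 < ε) (hAB : ∀ a ∈ A, ∃ b ∈ B, d a b < ε)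
    (hBA : ∀ b ∈ B, ∃ a ∈ A, d b a < ε) : HD d A B ≤ ENNReal.ofReal ε := by
  refine sInf_le ⟨ENNReal.ofReal_pos.2 hε, fun a ha => ?_, fun b hb => ?_⟩
  · obtain ⟨b, hb, hab⟩ := hAB a ha
    exact ⟨b, hb, (ENNReal.ofReal_lt_ofReal_iff hε).2 hab⟩
  · obtain ⟨a, ha, hba⟩ := hBA b hb
    exact ⟨a, ha, (ENNReal.ofReal_lt_ofReal_iff hε).2 hba⟩

theorem tendsto_HD_zero {α : Type*} {l : Filter α} {A : α → Set X} {B : Set X}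
    (h : ∀ ε > (0 : ℝ), ∀ᶠ k in l,
      (∀ a ∈ A k, ∃ b ∈ B, d a b < ε) ∧ (∀ b ∈ B, ∃ a ∈ A k, d b a < ε)) :
    Tendsto (fun k => HD d (A k) B) l (𝓝 0) := by
  refine ENNReal.tendsto_nhds_zero.2 fun ε hε => ?_
  obtain ⟨r, hr, hrε⟩ := ENNReal.lt_iff_exists_nnreal_btwn.1 hε
  have hr : (0 : ℝ) < r := by exact_mod_cast hr
  filter_upwards [h r hr] with k hk
  exact (HD_le_ofReal hr hk.1 hk.2).trans (by rw [ENNReal.ofReal_coe_nnreal]; exact hrε.le)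

end Semimetric

open Semimetric

theorem statement19_general {X : Type*} (d : X → X → ℝ)
    (hpos : ∀ x y, 0 ≤ d x y) (hsymm : ∀ x y, d x y = d y x)
    (hzero : ∀ x y, d x y = 0 ↔ x = y)
    (Φ : ℝ → ℝ → ℝ) (hΦ : IsTriangleFunR d Φ)
    (husc : UpperSemicontinuousOn (fun p : ℝ × ℝ => Φ p.1 p.2) (Set.Ici 0 ×ˢ Set.Ici 0))
    (φ : ℝ → ℝ) (hφ : IsComparison φ)
    (n : ℕ)
    (T : ℕ → Fin n → X → X) (T₀ : Fin n → X → X)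
    (hT : ∀ k j, IsContraction d φ (T k j)) (hT₀ : ∀ j, IsContraction d φ (T₀ j))
    (hconv : ∀ j x, Tendsto (fun k => d (T k j x) (T₀ j x)) atTop (nhds 0))
    (H : ℕ → Set X) (H₀ : Set X)
    (hH : ∀ k, (H k).Nonempty ∧ IsCompactS d (H k) ∧ H k = ⋃ j, T k j '' H k)
    (hH₀ : H₀.Nonempty ∧ IsCompactS d H₀ ∧ H₀ = ⋃ j, T₀ j '' H₀) :
    Tendsto (fun k => HD d (H k) H₀) atTop (nhds 0) := by
  have hself : ∀ x, d x x = 0 := fun x => (hzero x x).2 rfl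
  have hd : IsRegularS d := hΦ.isRegularS hpos (husc (0, 0) (mk_mem_prod self_mem_Ici self_mem_Ici))
  have hH₀b : TotBddS d H₀ := hH₀.2.1.totBddS hd hself
  refine tendsto_HD_zero fun ε hε => ?_
  obtain ⟨δ, hδ, hsmall⟩ := hd ε hε
  obtain ⟨η, hη, hword⟩ := exists_forall_dist_applyWord_le hpos hself hφ hd hH₀.2.2 hδ
  have hunif : ∀ᶠ k in atTop, ∀ j, ∀ x ∈ H₀, d (T k j x) (T₀ j x) ≤ η :=
    eventually_all.2 fun j =>
      hH₀b.eventually_forall_dist_le hpos hsymm hφ hd (fun k => hT k j) (hT₀ j) (hconv j) hη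
  filter_upwards [hunif] with k hk
  exact forall_exists_dist_lt_of_forall_dist_applyWord_le hpos hsymm hφ hΦ (hT k) hH₀.2.2
    (hH k).2.2 hH₀.1 (hH k).1 hH₀b ((hH k).2.1.totBddS hd hself) hδ hsmall (hword (T k) (hT k) hk)

/-- stability of fractals with respect to pointwise
convergence of the contractions. -/
theorem statement19 {X : Type*} (d : X → X → ℝ)
    (hpos : ∀ x y, 0 ≤ d x y) (hsymm : ∀ x y, d x y = d y x)
    (hzero : ∀ x y, d x y = 0 ↔ x = y)
    (hcomplete : IsCompleteS d)
    (Φ : ℝ → ℝ → ℝ) (hΦ : IsTriangleFunR d Φ)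
    (husc : UpperSemicontinuousOn (fun p : ℝ × ℝ => Φ p.1 p.2) (Set.Ici 0 ×ˢ Set.Ici 0))
    (φ : ℝ → ℝ) (hφ : IsComparison φ)
    (hφusc : UpperSemicontinuousOn φ (Set.Ici 0))
    (n : ℕ) (hn : 0 < n)
    (T : ℕ → Fin n → X → X) (T₀ : Fin n → X → X)
    (hT : ∀ k j, IsContraction d φ (T k j)) (hT₀ : ∀ j, IsContraction d φ (T₀ j))
    (hconv : ∀ j x, Tendsto (fun k => d (T k j x) (T₀ j x)) atTop (nhds 0))
    (H : ℕ → Set X) (H₀ : Set X)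
    (hH : ∀ k, (H k).Nonempty ∧ IsCompactS d (H k) ∧ H k = ⋃ j, T k j '' H k)
    (hH₀ : H₀.Nonempty ∧ IsCompactS d H₀ ∧ H₀ = ⋃ j, T₀ j '' H₀) :
    Tendsto (fun k => HD d (H k) H₀) atTop (nhds 0) :=
  statement19_general d hpos hsymm hzero Φ hΦ husc φ hφ n T T₀ hT hT₀ hconv H H₀ hH hH₀
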